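/- arXiv:1909.09667 — 3 statements merged into one kernel-verified Lean document; each statement's English description precedes it below -/
import Mathlib

section
/- Two binary hierarchies T₁ and T₂ on the same leaf set X with |X| ≥ 3 are isomorphic (induce the same set of clusters) if and only if Trip(T₁) = Trip(T₂). -/
/-- A binary hierarchy: a binary tree with labeled leaves. -/
inductive BTree (α : Type) : Type where
  | leaf : α → BTree α
  | node : BTree α → BTree α → BTree α

namespace BTree

variable {α : Type} [DecidableEq α]

/-- The list of leaves of a binary tree. -/
def leaves : BTree α → List α
  | .leaf a => [a]
  | .node l r => l.leaves ++ r.leaves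

/-- Number of leaves. -/
def size (t : BTree α) : ℕ := t.leaves.length

/-- The subtree rooted at the least common ancestor of leaves `i` and `j`. -/
def lca : BTree α → α → α → BTree α
  | .leaf a, _, _ => .leaf a
  | .node l r, i, j =>
    if i ∈ l.leaves ∧ j ∈ l.leaves then l.lca i j
    else if i ∈ r.leaves ∧ j ∈ r.leaves then r.lca i j
    else .node l r

/-- All subtrees of a binary tree. -/
def subtrees : BTree α → List (BTree α)
  | .leaf a => [.leaf a]
  | .node l r => .node l r :: (l.subtrees ++ r.subtrees)

end BTree

/-- Unordered pairs (represented as ordered pairs `p.1 < p.2`) of leaves of a tree on `ℕ`. -/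
def leafPairs (t : BTree ℕ) : Finset (ℕ × ℕ) :=
  (t.leaves.toFinset ×ˢ t.leaves.toFinset).filter (fun p => p.1 < p.2)

/-- Total intra-tree similarity `w(T) = ∑_{i<j ∈ leaves(T)} w i j`. -/
noncomputable def wsum (w : ℕ → ℕ → ℝ) (t : BTree ℕ) : ℝ :=
  ∑ p ∈ leafPairs t, w p.1 p.2

/-- Dasgupta cost of hierarchy `t`. -/
noncomputable def dasguptaCost (w : ℕ → ℕ → ℝ) (t : BTree ℕ) : ℝ :=
  ∑ p ∈ leafPairs t, w p.1 p.2 * ((t.lca p.1 p.2).size : ℝ)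

/-- Moseley–Wang revenue of hierarchy `t` (complement within the leaf set of `t`). -/
noncomputable def mwRev (w : ℕ → ℕ → ℝ) (t : BTree ℕ) : ℝ :=
  ∑ p ∈ leafPairs t, w p.1 p.2 * ((t.size - (t.lca p.1 p.2).size : ℕ) : ℝ)

/-- The triplet set of a hierarchy on `ℕ`-labeled leaves: ordered triples of
distinct leaves `(i,j,k)` with `k ∉ leaves(lca(i,j))`. -/
def trip (t : BTree ℕ) : Finset (ℕ × ℕ × ℕ) :=
  ((t.leaves.toFinset ×ˢ t.leaves.toFinset ×ˢ t.leaves.toFinset).filter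
    (fun p => p.1 ≠ p.2.1 ∧ p.1 ≠ p.2.2 ∧ p.2.1 ≠ p.2.2 ∧
      p.2.2 ∉ (t.lca p.1 p.2.1).leaves))

/-- The family of clusters induced by a hierarchy: the leaf sets of all its subtrees. -/
def clusters (t : BTree ℕ) : Finset (Finset ℕ) :=
  (t.subtrees.map (fun s => s.leaves.toFinset)).toFinset

/-!
A triple `(i, j, k)` of distinct leaves lies in `Trip(T)` exactly when some cluster contains
`i` and `j` but not `k`, because `leaves(lca(i, j))` is the smallest cluster containing `i`
and `j`. Conversely, a nonempty set `C` of leaves is a cluster exactly when `(i, j, k) ∈ Trip(T)`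
for all `i ≠ j` in `C` and all leaves `k ∉ C`: if `s` is the smallest subtree whose leaves
contain `C`, then either `C` is the single leaf `s`, or `C` meets both children of `s`, so that
`s = lca(i, j)` for some `i, j ∈ C` and the triplet condition forces `leaves(s) ⊆ C`.
Hence the cluster family and the triplet set determine each other.
-/

namespace BTree

variable {α : Type}

theorem leaves_ne_nil (t : BTree α) : t.leaves ≠ [] := by
  cases t <;> simp [leaves, leaves_ne_nil]

theorem mem_subtrees_self (t : BTree α) : t ∈ t.subtrees := by
  cases t <;> simp [subtrees]

theorem mem_subtrees_node {s l r : BTree α} :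
    s ∈ (node l r).subtrees ↔ s = node l r ∨ s ∈ l.subtrees ∨ s ∈ r.subtrees := by
  simp [subtrees]

theorem leaves_subset_of_mem_subtrees {s t : BTree α} (hs : s ∈ t.subtrees) :
    s.leaves ⊆ t.leaves := by
  induction t with
  | leaf a => simp_all [subtrees]
  | node l r ihl ihr =>
    rcases mem_subtrees_node.mp hs with rfl | hs | hs
    · exact List.Subset.refl _
    · exact List.Subset.trans (ihl hs) (List.subset_append_left _ _)
    · exact List.Subset.trans (ihr hs) (List.subset_append_right _ _)

theorem nodup_leaves_node {l r : BTree α} :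
    (node l r).leaves.Nodup ↔ l.leaves.Nodup ∧ r.leaves.Nodup ∧ l.leaves.Disjoint r.leaves := by
  simp only [leaves, List.nodup_append, List.disjoint_iff_ne]

theorem nodup_leaves_of_mem_subtrees {s t : BTree α} (ht : t.leaves.Nodup)
    (hs : s ∈ t.subtrees) : s.leaves.Nodup := by
  induction t with
  | leaf a => simp_all [subtrees]
  | node l r ihl ihr =>
    obtain ⟨hl, hr, -⟩ := nodup_leaves_node.mp ht
    rcases mem_subtrees_node.mp hs with rfl | hs | hs
    exacts [ht, ihl hl hs, ihr hr hs]

theorem exists_mem_subtrees_minimal (t : BTree α) {C : Finset α} (hne : C.Nonempty)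
    (hC : ∀ x ∈ C, x ∈ t.leaves) :
    ∃ s ∈ t.subtrees, (∀ x ∈ C, x ∈ s.leaves) ∧
      ((∃ x, s = leaf x ∧ C = {x}) ∨
        ∃ l r, s = node l r ∧ (∃ i ∈ C, i ∈ l.leaves) ∧ ∃ j ∈ C, j ∈ r.leaves) := by
  induction t with
  | leaf a =>
    refine ⟨leaf a, mem_subtrees_self _, hC, .inl ⟨a, rfl, ?_⟩⟩
    exact Finset.eq_singleton_iff_nonempty_unique_mem.mpr ⟨hne, by simpa [leaves] using hC⟩
  | node l r ihl ihr =>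
    by_cases hl : ∀ x ∈ C, x ∈ l.leaves
    · obtain ⟨s, hs, hCs⟩ := ihl hl
      exact ⟨s, mem_subtrees_node.mpr (.inr (.inl hs)), hCs⟩
    by_cases hr : ∀ x ∈ C, x ∈ r.leaves
    · obtain ⟨s, hs, hCs⟩ := ihr hr
      exact ⟨s, mem_subtrees_node.mpr (.inr (.inr hs)), hCs⟩
    push Not at hl hr
    obtain ⟨j, hjC, hjl⟩ := hl
    obtain ⟨i, hiC, hir⟩ := hr
    have hi : i ∈ l.leaves := (List.mem_append.mp (hC i hiC)).resolve_right hir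
    have hj : j ∈ r.leaves := (List.mem_append.mp (hC j hjC)).resolve_left hjl
    exact ⟨node l r, mem_subtrees_self _, hC, .inr ⟨l, r, rfl, ⟨i, hiC, hi⟩, j, hjC, hj⟩⟩

variable [DecidableEq α]

theorem leaves_toFinset_subset_of_mem_subtrees {s t : BTree α} (hs : s ∈ t.subtrees) :
    s.leaves.toFinset ⊆ t.leaves.toFinset := fun _ hx =>
  List.mem_toFinset.mpr (leaves_subset_of_mem_subtrees hs (List.mem_toFinset.mp hx))

theorem lca_mem_subtrees (t : BTree α) (i j : α) : t.lca i j ∈ t.subtrees := by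
  induction t with
  | leaf a => simp [lca, subtrees]
  | node l r ihl ihr =>
    rw [lca, mem_subtrees_node]
    split_ifs
    exacts [.inr (.inl ihl), .inr (.inr ihr), .inl rfl]

theorem mem_leaves_lca {t : BTree α} {i j : α} (hi : i ∈ t.leaves) (hj : j ∈ t.leaves) :
    i ∈ (t.lca i j).leaves ∧ j ∈ (t.lca i j).leaves := by
  induction t with
  | leaf a => simpa [lca] using ⟨hi, hj⟩
  | node l r ihl ihr =>
    rw [lca]
    split_ifs with hl hr
    exacts [ihl hl.1 hl.2, ihr hr.1 hr.2, ⟨hi, hj⟩]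

theorem leaves_lca_subset {s t : BTree α} (ht : t.leaves.Nodup) (hs : s ∈ t.subtrees)
    {i j : α} (hi : i ∈ s.leaves) (hj : j ∈ s.leaves) : (t.lca i j).leaves ⊆ s.leaves := by
  induction t with
  | leaf a =>
    simp only [subtrees, List.mem_singleton] at hs
    simp [hs, lca]
  | node l r ihl ihr =>
    obtain ⟨hl, hr, hlr⟩ := nodup_leaves_node.mp ht
    rcases mem_subtrees_node.mp hs with rfl | hs | hs
    · exact leaves_subset_of_mem_subtrees (lca_mem_subtrees _ i j)
    · have hsl := leaves_subset_of_mem_subtrees hs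
      rw [lca, if_pos ⟨hsl hi, hsl hj⟩]
      exact ihl hl hs
    · have hsr := leaves_subset_of_mem_subtrees hs
      rw [lca, if_neg fun h => hlr h.1 (hsr hi), if_pos ⟨hsr hi, hsr hj⟩]
      exact ihr hr hs

theorem lca_eq_of_mem_left_of_mem_right {t l r : BTree α} (ht : t.leaves.Nodup)
    (hs : node l r ∈ t.subtrees) {i j : α} (hi : i ∈ l.leaves) (hj : j ∈ r.leaves) :
    t.lca i j = node l r := by
  induction t with
  | leaf a => simp [subtrees] at hs
  | node L R ihL ihR =>
    obtain ⟨hL, hR, hLR⟩ := nodup_leaves_node.mp ht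
    have hsub := leaves_subset_of_mem_subtrees hs
    have hi' : i ∈ (node l r).leaves := List.mem_append_left _ hi
    have hj' : j ∈ (node l r).leaves := List.mem_append_right _ hj
    rcases mem_subtrees_node.mp hs with h | hs | hs
    · obtain ⟨rfl, rfl⟩ := node.inj h
      rw [lca, if_neg fun h => hLR h.2 hj, if_neg fun h => hLR hi h.1]
    · rw [lca, if_pos ⟨leaves_subset_of_mem_subtrees hs hi', leaves_subset_of_mem_subtrees hs hj'⟩]
      exact ihL hL hs
    · have hiR := leaves_subset_of_mem_subtrees hs hi'
      rw [lca, if_neg fun h => hLR h.1 hiR, if_pos ⟨hiR, leaves_subset_of_mem_subtrees hs hj'⟩]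
      exact ihR hR hs

end BTree

open BTree

theorem mem_clusters {t : BTree ℕ} {C : Finset ℕ} :
    C ∈ clusters t ↔ ∃ s ∈ t.subtrees, s.leaves.toFinset = C := by
  simp [clusters]

theorem mem_trip {t : BTree ℕ} {i j k : ℕ} :
    (i, j, k) ∈ trip t ↔ (i ∈ t.leaves ∧ j ∈ t.leaves ∧ k ∈ t.leaves) ∧
      (i ≠ j ∧ i ≠ k ∧ j ≠ k) ∧ k ∉ (t.lca i j).leaves := by
  simp only [trip, Finset.mem_filter, Finset.mem_product, List.mem_toFinset, and_assoc]

theorem mem_trip_iff_exists_mem_clusters {t : BTree ℕ} (ht : t.leaves.Nodup) {i j k : ℕ} :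
    (i, j, k) ∈ trip t ↔ (i ∈ t.leaves.toFinset ∧ j ∈ t.leaves.toFinset ∧ k ∈ t.leaves.toFinset) ∧
      (i ≠ j ∧ i ≠ k ∧ j ≠ k) ∧ ∃ C ∈ clusters t, i ∈ C ∧ j ∈ C ∧ k ∉ C := by
  simp only [mem_trip, List.mem_toFinset]
  refine and_congr_right fun hmem => and_congr_right fun _ => ⟨fun hk => ?_, ?_⟩
  · have hij := mem_leaves_lca hmem.1 hmem.2.1
    refine ⟨_, mem_clusters.mpr ⟨t.lca i j, lca_mem_subtrees t i j, rfl⟩, ?_⟩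
    simpa [hij] using hk
  · rintro ⟨C, hC, hiC, hjC, hkC⟩ hk
    obtain ⟨s, hs, rfl⟩ := mem_clusters.mp hC
    rw [List.mem_toFinset] at hiC hjC hkC
    exact hkC (leaves_lca_subset ht hs hiC hjC hk)

theorem mem_trip_of_mem_clusters {t : BTree ℕ} (ht : t.leaves.Nodup) {C : Finset ℕ}
    (hC : C ∈ clusters t) {i j k : ℕ} (hi : i ∈ C) (hj : j ∈ C) (hij : i ≠ j)
    (hk : k ∈ t.leaves.toFinset \ C) : (i, j, k) ∈ trip t := by
  rw [Finset.mem_sdiff] at hk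
  obtain ⟨s, hs, rfl⟩ := mem_clusters.mp hC
  have hst := leaves_toFinset_subset_of_mem_subtrees hs
  refine (mem_trip_iff_exists_mem_clusters ht).mpr
    ⟨⟨hst hi, hst hj, hk.1⟩, ⟨hij, ?_, ?_⟩, _, hC, hi, hj, hk.2⟩
  exacts [ne_of_mem_of_not_mem hi hk.2, ne_of_mem_of_not_mem hj hk.2]

theorem mem_clusters_of_forall_mem_trip {t : BTree ℕ} (ht : t.leaves.Nodup) {C : Finset ℕ}
    (hne : C.Nonempty) (hCt : C ⊆ t.leaves.toFinset)
    (htrip : ∀ i ∈ C, ∀ j ∈ C, i ≠ j → ∀ k ∈ t.leaves.toFinset \ C, (i, j, k) ∈ trip t) :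
    C ∈ clusters t := by
  obtain ⟨s, hs, hCs, ⟨x, rfl, rfl⟩ | ⟨l, r, rfl, ⟨i, hiC, hi⟩, j, hjC, hj⟩⟩ :=
    t.exists_mem_subtrees_minimal hne fun x hx => List.mem_toFinset.mp (hCt hx)
  · exact mem_clusters.mpr ⟨leaf x, hs, by simp [leaves]⟩
  refine mem_clusters.mpr ⟨node l r, hs, Finset.Subset.antisymm (fun k hk => ?_)
    fun x hx => List.mem_toFinset.mpr (hCs x hx)⟩
  have hij : i ≠ j := fun h =>
    (nodup_leaves_node.mp (nodup_leaves_of_mem_subtrees ht hs)).2.2 hi (h ▸ hj)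
  have hk := List.mem_toFinset.mp hk
  by_contra hkC
  have hkt := List.mem_toFinset.mpr (leaves_subset_of_mem_subtrees hs hk)
  have := (mem_trip.mp (htrip i hiC j hjC hij k (Finset.mem_sdiff.mpr ⟨hkt, hkC⟩))).2.2
  rw [lca_eq_of_mem_left_of_mem_right ht hs hi hj] at this
  exact this hk

theorem mem_clusters_iff_forall_mem_trip {t : BTree ℕ} (ht : t.leaves.Nodup) {C : Finset ℕ} :
    C ∈ clusters t ↔ C.Nonempty ∧ C ⊆ t.leaves.toFinset ∧
      ∀ i ∈ C, ∀ j ∈ C, i ≠ j → ∀ k ∈ t.leaves.toFinset \ C, (i, j, k) ∈ trip t := by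
  refine ⟨fun hC => ?_, fun ⟨hne, hCt, htrip⟩ => mem_clusters_of_forall_mem_trip ht hne hCt htrip⟩
  obtain ⟨s, hs, rfl⟩ := mem_clusters.mp hC
  refine ⟨?_, leaves_toFinset_subset_of_mem_subtrees hs,
    fun i hi j hj hij k hk => mem_trip_of_mem_clusters ht hC hi hj hij hk⟩
  obtain ⟨x, hx⟩ := List.exists_mem_of_ne_nil _ (leaves_ne_nil s)
  exact ⟨x, List.mem_toFinset.mpr hx⟩

theorem clusters_eq_iff_trip_eq_general (n : ℕ) (t₁ t₂ : BTree ℕ)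
    (h₁ : t₁.leaves.Nodup) (h₂ : t₂.leaves.Nodup)
    (hl₁ : t₁.leaves.toFinset = Finset.range n)
    (hl₂ : t₂.leaves.toFinset = Finset.range n) :
    clusters t₁ = clusters t₂ ↔ trip t₁ = trip t₂ := by
  constructor
  · intro hcl
    ext ⟨i, j, k⟩
    rw [mem_trip_iff_exists_mem_clusters h₁, mem_trip_iff_exists_mem_clusters h₂, hcl, hl₁, hl₂]
  · intro htr
    ext C
    rw [mem_clusters_iff_forall_mem_trip h₁, mem_clusters_iff_forall_mem_trip h₂, htr, hl₁, hl₂]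

/-- Two binary hierarchies on the same leaf set of at least 3 points induce the
same set of clusters if and only if they have the same triplet set. -/
theorem clusters_eq_iff_trip_eq (n : ℕ) (hn : 3 ≤ n) (t₁ t₂ : BTree ℕ)
    (h₁ : t₁.leaves.Nodup) (h₂ : t₂.leaves.Nodup)
    (hl₁ : t₁.leaves.toFinset = Finset.range n)
    (hl₂ : t₂.leaves.toFinset = Finset.range n) :
    clusters t₁ = clusters t₂ ↔ trip t₁ = trip t₂ :=
  clusters_eq_iff_trip_eq_general n t₁ t₂ h₁ h₂ hl₁ hl₂
end

section
/- Given a dataset of three collinear points at positions 0, 1, and K > 2 on the real line with similarity w_{ij} = −|x_i − x_j|, the hierarchy that first merges the points at 1 and K (i.e., ((1,K),0)) achieves Moseley–Wang revenue −(K−1), while the optimal hierarchy ((0,1),K) achieves revenue −1; hence the ratio of revenues is unbounded as K → ∞. -/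
/-- Positions of the three collinear points `0`, `1`, `K`. -/
noncomputable def pos (K : ℝ) : ℕ → ℝ := fun i => if i = 0 then 0 else if i = 1 then 1 else K

/-- Similarity given by negated Euclidean distance between the positions. -/
noncomputable def wLine (K : ℝ) (i j : ℕ) : ℝ := -|pos K i - pos K j|

/-! In a three-leaf hierarchy `((a,b),c)` every pair other than `{a,b}` has the root as least
common ancestor and so weight `3 - 3 = 0`, while `{a,b}` has weight `3 - 2 = 1`. The revenue is
therefore the single similarity `w a b`: `-(K-1)` when the far pair `{1,K}` is merged first and
`-1` when the close pair `{0,1}` is. -/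

theorem mwRev_node_node_leaf {a b c : ℕ} (hab : a < b) (w : ℕ → ℕ → ℝ) :
    mwRev w (.node (.node (.leaf a) (.leaf b)) (.leaf c)) = w a b := by
  unfold mwRev
  rw [Finset.sum_eq_single (a, b)]
  · simp [BTree.lca, BTree.size, BTree.leaves, hab.ne, hab.ne']
  · rintro ⟨i, j⟩ hij hne
    simp only [leafPairs, BTree.leaves, Finset.mem_filter, Finset.mem_product,
      List.mem_toFinset] at hij
    have hroot : (BTree.node (.node (.leaf a) (.leaf b)) (.leaf c)).lca i j
        = .node (.node (.leaf a) (.leaf b)) (.leaf c) := by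
      simp only [BTree.lca, BTree.leaves, List.mem_append, List.mem_singleton, Ne,
        Prod.mk.injEq] at hij hne ⊢
      rw [if_neg (by omega), if_neg (by omega)]
    simp [hroot, BTree.size]
  · intro hnot
    exact absurd (by simp [leafPairs, BTree.leaves, hab]) hnot

theorem wLine_zero_one (K : ℝ) : wLine K 0 1 = -1 := by
  simp [wLine, pos]

theorem wLine_one_two {K : ℝ} (hK : 1 ≤ K) : wLine K 1 2 = -(K - 1) := by
  simp [wLine, pos, abs_sub_comm, abs_of_nonneg (sub_nonneg.mpr hK)]

/-- For three collinear points at `0, 1, K` (`K > 2`) with similarity the negated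
distance: the hierarchy `((1,K),0)` (produced by Naïve₂) has Moseley–Wang revenue
`−(K−1)`, the optimal hierarchy `((0,1),K)` has revenue `−1`, and the ratio
`(K−1)/1` of these (absolute) revenues is unbounded as `K → ∞`. -/
theorem naive2_unbounded :
    (∀ K : ℝ, K > 2 →
      mwRev (wLine K) (BTree.node (BTree.node (BTree.leaf 1) (BTree.leaf 2)) (BTree.leaf 0))
        = -(K - 1)
      ∧ mwRev (wLine K) (BTree.node (BTree.node (BTree.leaf 0) (BTree.leaf 1)) (BTree.leaf 2))
        = -1)
    ∧ ∀ M : ℝ, ∃ K : ℝ, K > 2 ∧ (K - 1) / 1 > M := by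
  refine ⟨fun K hK => ⟨?_, ?_⟩, fun M => ⟨max 3 (M + 2), ?_, ?_⟩⟩
  · rw [mwRev_node_node_leaf (by norm_num), wLine_one_two (by linarith)]
  · rw [mwRev_node_node_leaf (by norm_num), wLine_zero_one]
  · linarith [le_max_left 3 (M + 2)]
  · rw [div_one]
    linarith [le_max_right 3 (M + 2)]
end

section
/- Let T be a binary hierarchy satisfying the β-well-separatedness condition with respect to a new point x: for every subtree S of T with children A and B such that w̄(S,{x}) > w̄(S) and w̄(A,{x}) ≤ w̄(B,{x}), one has w̄(A) ≥ β·w̄(A,{x}). Then the revenue gain Δ^{OTD} of the OTD insertion of x into T satisfies Δ^{OTD} ≥ β·((n−1)/2)·w(T,{x}) whenever w̄(T,{x}) > w̄(T), where n is the number of leaves of T. (Proved by structural induction on T.) -/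
/-- Total similarity `w(T,{x}) = ∑_{i ∈ leaves(T)} w i x` of a new point `x` to tree `T`. -/
noncomputable def crossSum (w : ℕ → ℕ → ℝ) (t : BTree ℕ) (x : ℕ) : ℝ :=
  ∑ i ∈ t.leaves.toFinset, w i x

/-- Average intra-tree similarity `w̄(T) = w(T) / C(|T|, 2)`. -/
noncomputable def wbar (w : ℕ → ℕ → ℝ) (t : BTree ℕ) : ℝ :=
  wsum w t / (Nat.choose t.size 2 : ℝ)

/-- Average similarity `w̄(T,{x}) = w(T,{x}) / |T|` of point `x` to tree `T`. -/
noncomputable def wbarCross (w : ℕ → ℕ → ℝ) (t : BTree ℕ) (x : ℕ) : ℝ :=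
  crossSum w t x / (t.size : ℝ)

open Classical in
/-- The Moseley–Wang revenue gain of the OTD insertion of point `x` into tree `T`:
if `w̄(T) ≥ w̄(T,{x})` then `x` is attached as a sibling of the root, gaining `w(T)`;
otherwise OTD recurses into the child with larger average similarity to `x`, and
the gain decomposes as `Δ(node A B) = w(A) + |A|·w(B,{x}) + Δ(B)` when recursing
into `B` (symmetrically for `A`). -/
noncomputable def deltaOTD (w : ℕ → ℕ → ℝ) (x : ℕ) : BTree ℕ → ℝ
  | .leaf a => w a x
  | .node A B =>
    if wbar w (.node A B) ≥ wbarCross w (.node A B) x then wsum w (.node A B)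
    else if wbarCross w A x ≤ wbarCross w B x then
      wsum w A + (A.size : ℝ) * crossSum w B x + deltaOTD w x B
    else
      wsum w B + (B.size : ℝ) * crossSum w A x + deltaOTD w x A

/-! When OTD stops at a subtree `S` with `n` leaves, `w̄(S) ≥ w̄(S,{x})` unfolds to
`w(S) ≥ ((n-1)/2)·w(S,{x})`, which is the bound with `β = 1`. When it recurses into `B`
with sibling `A`, well-separatedness gives `w(A) ≥ β·((|A|-1)/2)·w(A,{x})` in the same way,
induction gives the bound for `Δ(B)`, and the cross term `|A|·w(B,{x})` pays for the remaining
`β·(|B|·w(A,{x}) + |A|·w(B,{x}))/2`, since `w̄(A,{x}) ≤ w̄(B,{x})` means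
`|B|·w(A,{x}) ≤ |A|·w(B,{x})`. -/

namespace BTree

theorem size_pos {α : Type} (t : BTree α) : 0 < t.size := by
  induction t with
  | leaf a => simp [size, leaves]
  | node l r ihl ihr =>
    simp only [size, leaves, List.length_append] at *
    omega

theorem size_node {α : Type} (l r : BTree α) : (node l r).size = l.size + r.size :=
  List.length_append

theorem subtrees_node {α : Type} (l r : BTree α) :
    (node l r).subtrees = node l r :: (l.subtrees ++ r.subtrees) :=
  rfl

end BTree

theorem wsum_nonneg {w : ℕ → ℕ → ℝ} (hw : ∀ i j, 0 ≤ w i j) (t : BTree ℕ) : 0 ≤ wsum w t :=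
  Finset.sum_nonneg fun p _ => hw p.1 p.2

theorem crossSum_nonneg {w : ℕ → ℕ → ℝ} (hw : ∀ i j, 0 ≤ w i j) (t : BTree ℕ) (x : ℕ) :
    0 ≤ crossSum w t x :=
  Finset.sum_nonneg fun i _ => hw i x

theorem wbarCross_nonneg {w : ℕ → ℕ → ℝ} (hw : ∀ i j, 0 ≤ w i j) (t : BTree ℕ) (x : ℕ) :
    0 ≤ wbarCross w t x :=
  div_nonneg (crossSum_nonneg hw t x) (Nat.cast_nonneg _)

theorem crossSum_node (w : ℕ → ℕ → ℝ) (x : ℕ) {A B : BTree ℕ}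
    (hnodup : (BTree.node A B).leaves.Nodup) :
    crossSum w (BTree.node A B) x = crossSum w A x + crossSum w B x := by
  have hdisj : Disjoint A.leaves.toFinset B.leaves.toFinset :=
    List.disjoint_toFinset_iff_disjoint.mpr (List.disjoint_of_nodup_append hnodup)
  exact (congrArg (∑ i ∈ ·, w i x) (List.toFinset_append)).trans (Finset.sum_union hdisj)

theorem wsum_ge_of_mul_wbarCross_le_wbar {w : ℕ → ℕ → ℝ} (hw : ∀ i j, 0 ≤ w i j) {c : ℝ}
    (t : BTree ℕ) (x : ℕ) (h : c * wbarCross w t x ≤ wbar w t) :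
    c * (((t.size : ℝ) - 1) / 2) * crossSum w t x ≤ wsum w t := by
  obtain hone | htwo : t.size = 1 ∨ 2 ≤ t.size := by have := t.size_pos; omega
  · simpa [hone] using wsum_nonneg hw t
  · have hn : (0 : ℝ) < t.size := by exact_mod_cast t.size_pos
    have hchoose : (0 : ℝ) < (t.size.choose 2 : ℝ) := by exact_mod_cast Nat.choose_pos htwo
    rw [wbar, wbarCross, le_div_iff₀ hchoose, Nat.cast_choose_two] at h
    calc c * (((t.size : ℝ) - 1) / 2) * crossSum w t x
        = c * (crossSum w t x / t.size) * (t.size * (t.size - 1) / 2) := by field_simp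
      _ ≤ wsum w t := h

theorem otd_recursion_step {β a b XA XB WA DB : ℝ} (hβ0 : 0 ≤ β) (hβ1 : β ≤ 1)
    (ha : 0 < a) (hb : 0 < b) (hXB : 0 ≤ XB) (hord : XA / a ≤ XB / b)
    (hA : β * ((a - 1) / 2) * XA ≤ WA) (hB : β * ((b - 1) / 2) * XB ≤ DB) :
    β * ((a + b - 1) / 2) * (XA + XB) ≤ WA + a * XB + DB := by
  have hcross : β * (XA * b) ≤ β * (XB * a) :=
    mul_le_mul_of_nonneg_left ((div_le_div_iff₀ ha hb).mp hord) hβ0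
  have hcheap : β * (a * XB) ≤ a * XB :=
    mul_le_of_le_one_left (mul_nonneg ha.le hXB) hβ1
  nlinarith

def WellSeparated (w : ℕ → ℕ → ℝ) (β : ℝ) (x : ℕ) (t : BTree ℕ) : Prop :=
  ∀ A B : BTree ℕ, BTree.node A B ∈ t.subtrees →
    wbarCross w (BTree.node A B) x > wbar w (BTree.node A B) →
    ((wbarCross w A x ≤ wbarCross w B x → wbar w A ≥ β * wbarCross w A x) ∧
     (wbarCross w B x ≤ wbarCross w A x → wbar w B ≥ β * wbarCross w B x))

namespace WellSeparated

variable {w : ℕ → ℕ → ℝ} {β : ℝ} {x : ℕ} {A B : BTree ℕ}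

theorem left (h : WellSeparated w β x (.node A B)) : WellSeparated w β x A :=
  fun A' B' hmem => h A' B' (by simp [BTree.subtrees_node, hmem])

theorem right (h : WellSeparated w β x (.node A B)) : WellSeparated w β x B :=
  fun A' B' hmem => h A' B' (by simp [BTree.subtrees_node, hmem])

theorem root (h : WellSeparated w β x (.node A B)) :
    wbarCross w (BTree.node A B) x > wbar w (BTree.node A B) →
    ((wbarCross w A x ≤ wbarCross w B x → wbar w A ≥ β * wbarCross w A x) ∧
     (wbarCross w B x ≤ wbarCross w A x → wbar w B ≥ β * wbarCross w B x)) :=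
  h A B (by simp [BTree.subtrees_node])

end WellSeparated

theorem deltaOTD_ge {w : ℕ → ℕ → ℝ} (hw : ∀ i j, 0 ≤ w i j) {β : ℝ} (hβ0 : 0 ≤ β)
    (hβ1 : β ≤ 1) (x : ℕ) (t : BTree ℕ) (hnodup : t.leaves.Nodup)
    (hsep : WellSeparated w β x t) :
    β * (((t.size : ℝ) - 1) / 2) * crossSum w t x ≤ deltaOTD w x t := by
  induction t with
  | leaf a => simpa [BTree.size, BTree.leaves, deltaOTD] using hw a x
  | node A B ihA ihB =>
    obtain ⟨hnodupA, hnodupB, -⟩ := List.nodup_append.mp hnodup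
    have ha : (0 : ℝ) < A.size := by exact_mod_cast A.size_pos
    have hb : (0 : ℝ) < B.size := by exact_mod_cast B.size_pos
    rw [deltaOTD]
    split_ifs with hstop hdir
    · exact wsum_ge_of_mul_wbarCross_le_wbar hw _ x
        ((mul_le_of_le_one_left (wbarCross_nonneg hw _ x) hβ1).trans hstop)
    · rw [BTree.size_node, crossSum_node w x hnodup, Nat.cast_add]
      exact otd_recursion_step hβ0 hβ1 ha hb (crossSum_nonneg hw B x) hdir
        (wsum_ge_of_mul_wbarCross_le_wbar hw A x ((hsep.root (not_le.mp hstop)).1 hdir))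
        (ihB hnodupB hsep.right)
    · have hdir' := (not_le.mp hdir).le
      rw [BTree.size_node, crossSum_node w x hnodup, Nat.cast_add, add_comm (A.size : ℝ),
        add_comm (crossSum w A x)]
      exact otd_recursion_step hβ0 hβ1 hb ha (crossSum_nonneg hw A x) hdir'
        (wsum_ge_of_mul_wbarCross_le_wbar hw B x ((hsep.root (not_le.mp hstop)).2 hdir'))
        (ihA hnodupA hsep.left)

theorem otd_case2_induction_general (w : ℕ → ℕ → ℝ) (hw : ∀ i j, 0 ≤ w i j)
    (β : ℝ) (hβ0 : 0 ≤ β) (hβ1 : β ≤ 1)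
    (t : BTree ℕ) (x : ℕ) (hnodup : t.leaves.Nodup)
    (hsep : ∀ A B : BTree ℕ, BTree.node A B ∈ t.subtrees →
      wbarCross w (BTree.node A B) x > wbar w (BTree.node A B) →
      ((wbarCross w A x ≤ wbarCross w B x → wbar w A ≥ β * wbarCross w A x) ∧
       (wbarCross w B x ≤ wbarCross w A x → wbar w B ≥ β * wbarCross w B x))) :
    deltaOTD w x t ≥ β * (((t.size : ℝ) - 1) / 2) * crossSum w t x :=
  deltaOTD_ge hw hβ0 hβ1 x t hnodup hsep

/-- Under β-well-separatedness with respect to the new point `x`, whenever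
`w̄(T,{x}) > w̄(T)` the OTD revenue gain satisfies
`Δ^{OTD} ≥ β·((n−1)/2)·w(T,{x})`, where `n` is the number of leaves of `T`. -/
theorem otd_case2_induction (w : ℕ → ℕ → ℝ) (hw : ∀ i j, 0 ≤ w i j)
    (β : ℝ) (hβ0 : 0 ≤ β) (hβ1 : β ≤ 1)
    (t : BTree ℕ) (x : ℕ) (hnodup : t.leaves.Nodup) (hx : x ∉ t.leaves)
    (hsep : ∀ A B : BTree ℕ, BTree.node A B ∈ t.subtrees →
      wbarCross w (BTree.node A B) x > wbar w (BTree.node A B) →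
      ((wbarCross w A x ≤ wbarCross w B x → wbar w A ≥ β * wbarCross w A x) ∧
       (wbarCross w B x ≤ wbarCross w A x → wbar w B ≥ β * wbarCross w B x)))
    (hmain : wbarCross w t x > wbar w t) :
    deltaOTD w x t ≥ β * (((t.size : ℝ) - 1) / 2) * crossSum w t x :=
  otd_case2_induction_general w hw β hβ0 hβ1 t x hnodup hsep
end
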